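/- Let n be a nonempty finite type with decidable equality, d := card n, and γ : ℝ with γ > 0. Let Δ(ρ) := Matrix.diagonal (fun i => ρ i i) denote the diagonal part and u := (1/d : ℝ) • (1 : Matrix n n ℂ) the maximally mixed state. Then sInf { γ · (D(ρ‖Δ(ρ)) + D(Δ(ρ)‖ρ)) / (2 · D(ρ‖Δ(ρ))) : ρ positive definite of trace 1, ρ ≠ Δ(ρ) } ≤ sInf { γ · (D(ρ‖u) + D(u‖ρ)) / (2 · D(ρ‖u)) : ρ positive definite of trace 1, ρ ≠ u }. -/

import Mathlib

open Matrix
open scoped ComplexOrder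

noncomputable def mlog {n : Type*} [Fintype n] [DecidableEq n] (A : Matrix n n ℂ) :
    Matrix n n ℂ := cfc Real.log A

noncomputable def relEnt {n : Type*} [Fintype n] [DecidableEq n]
    (ρ σ : Matrix n n ℂ) : ℝ := (Matrix.trace (ρ * (mlog ρ - mlog σ))).re

/-!
Diagonalise `ρ = U diag(λ) U*` and conjugate `diag(λ)` by the discrete Fourier matrix `F`,
all of whose entries have modulus `1/√d`: the state `σ = F diag(λ) F*` has constant diagonal
`tr ρ / d`, i.e. `Δσ = u`. Unitary conjugation fixes `u` and preserves relative entropy, so `σ`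
contributes to the decoherence set the same value that `ρ` contributes to the depolarizing set,
and the depolarizing set is contained in the decoherence set. Comparing the infima still needs
care, since `sInf` of an empty or unbounded-below set of reals is `0`; this is covered by
`D(ρ‖u) ≥ 0` and `D(u‖ρ) ≥ 0`, which are Gibbs' inequality for the eigenvalues of `ρ`.
-/

lemma Finset.sum_mul_log_div_nonneg {ι : Type*} (s : Finset ι) {v w : ι → ℝ}
    (hv : ∀ i ∈ s, 0 < v i) (hw : ∀ i ∈ s, 0 < w i) (hvw : ∑ i ∈ s, w i ≤ ∑ i ∈ s, v i) :
    0 ≤ ∑ i ∈ s, v i * Real.log (v i / w i) := by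
  have hterm : ∀ i ∈ s, v i - w i ≤ v i * Real.log (v i / w i) := fun i hi => by
    have h := mul_le_mul_of_nonneg_left
      (Real.one_sub_inv_le_log_of_pos (div_pos (hv i hi) (hw i hi))) (hv i hi).le
    rwa [inv_div, mul_sub, mul_one, mul_div_cancel₀ _ (hv i hi).ne'] at h
  calc (0 : ℝ) ≤ ∑ i ∈ s, (v i - w i) := by rw [Finset.sum_sub_distrib]; linarith
    _ ≤ _ := Finset.sum_le_sum hterm

lemma Real.sInf_le_sInf_of_subset_of_nonneg {S T : Set ℝ} (hST : S ⊆ T) (hS : ∀ x ∈ S, 0 ≤ x)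
    (hT : T.Nonempty → S.Nonempty) : sInf T ≤ sInf S := by
  rcases S.eq_empty_or_nonempty with rfl | hS_ne
  · rw [Set.not_nonempty_iff_eq_empty.mp (mt hT Set.not_nonempty_empty)]
  by_cases hT_bdd : BddBelow T
  · exact csInf_le_csInf hT_bdd hS_ne hST
  · rw [Real.sInf_of_not_bddBelow hT_bdd]
    exact Real.sInf_nonneg hS

namespace Matrix

open Unitary

variable {n : Type*} [Fintype n]

section Fourier

variable [Nonempty n] (e : n ≃ ZMod (Fintype.card n))

noncomputable def fourierMatrix : Matrix n n ℂ :=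
  of fun i j => ((√(Fintype.card n) : ℝ) : ℂ)⁻¹ * ZMod.stdAddChar (e i * e j)

lemma fourierMatrix_mul_star_apply (i k j : n) :
    fourierMatrix e i j * star (fourierMatrix e k j) =
      (Fintype.card n : ℂ)⁻¹ * ZMod.stdAddChar ((e i - e k) * e j) := by
  have hsq : ((√(Fintype.card n) : ℝ) : ℂ)⁻¹ * ((√(Fintype.card n) : ℝ) : ℂ)⁻¹ =
      (Fintype.card n : ℂ)⁻¹ := by
    rw [← mul_inv, ← Complex.ofReal_mul, Real.mul_self_sqrt (Nat.cast_nonneg _),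
      Complex.ofReal_natCast]
  simp only [fourierMatrix, of_apply, star_mul', Complex.star_def, map_inv₀, Complex.conj_ofReal,
    ← AddChar.map_neg_eq_conj]
  rw [mul_mul_mul_comm, hsq, ← AddChar.map_add_eq_mul, sub_mul, sub_eq_add_neg]

variable [DecidableEq n]

lemma fourierMatrix_mul_star : fourierMatrix e * star (fourierMatrix e) = 1 := by
  ext i k
  simp only [mul_apply, star_apply, fourierMatrix_mul_star_apply, ← Finset.mul_sum,
    mul_comm (e i - e k)]
  rw [Fintype.sum_equiv e _ (fun y => ZMod.stdAddChar (y * (e i - e k))) (fun _ => rfl),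
    AddChar.sum_mulShift _ (ZMod.isPrimitive_stdAddChar _), ZMod.card]
  simp only [sub_eq_zero, e.injective.eq_iff, one_apply]
  split_ifs <;> simp

lemma fourierMatrix_mem_unitary : fourierMatrix e ∈ unitary (Matrix n n ℂ) :=
  mem_unitaryGroup_iff.mpr (fourierMatrix_mul_star e)

lemma fourierMatrix_mul_diagonal_mul_star_apply_self (v : n → ℂ) (i : n) :
    (fourierMatrix e * diagonal v * star (fourierMatrix e)) i i =
      (Fintype.card n : ℂ)⁻¹ * ∑ j, v j := by
  rw [mul_apply, Finset.mul_sum]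
  refine Finset.sum_congr rfl fun j _ => ?_
  rw [mul_diagonal, star_apply, mul_right_comm, fourierMatrix_mul_star_apply, sub_self, zero_mul,
    AddChar.map_zero_eq_one]
  ring

end Fourier

variable [DecidableEq n]

lemma continuous_conjStarAlgAut (U : unitary (Matrix n n ℂ)) :
    Continuous (conjStarAlgAut ℂ (Matrix n n ℂ) U) := by
  simp only [← StarAlgEquiv.coe_toAlgEquiv]
  exact LinearMap.continuous_of_finiteDimensional
    (conjStarAlgAut ℂ (Matrix n n ℂ) U).toAlgEquiv.toLinearMap

lemma mlog_conjStarAlgAut (U : unitary (Matrix n n ℂ)) {A : Matrix n n ℂ}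
    (hA : IsSelfAdjoint A) :
    mlog (conjStarAlgAut ℂ _ U A) = conjStarAlgAut ℂ _ U (mlog A) :=
  (StarAlgHomClass.map_cfc (S := ℂ) _ Real.log A (finite_real_spectrum.continuousOn _)
    (continuous_conjStarAlgAut U)).symm

lemma trace_conjStarAlgAut (U : unitary (Matrix n n ℂ)) (A : Matrix n n ℂ) :
    (conjStarAlgAut ℂ _ U A).trace = A.trace := by
  rw [conjStarAlgAut_apply, trace_mul_cycle, coe_star_mul_self, one_mul]

lemma posDef_conjStarAlgAut_iff (U : unitary (Matrix n n ℂ)) {A : Matrix n n ℂ} :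
    (conjStarAlgAut ℂ _ U A).PosDef ↔ A.PosDef :=
  isUnit_coe.posDef_star_right_conjugate_iff

lemma conjStarAlgAut_smul_one (U : unitary (Matrix n n ℂ)) (c : ℝ) :
    conjStarAlgAut ℂ _ U (c • (1 : Matrix n n ℂ)) = c • 1 := by
  simp

lemma conjStarAlgAut_eq_smul_one_iff (U : unitary (Matrix n n ℂ)) {A : Matrix n n ℂ} (c : ℝ) :
    conjStarAlgAut ℂ _ U A = c • 1 ↔ A = c • 1 := by
  conv_lhs => rw [← conjStarAlgAut_smul_one U c]
  exact EquivLike.apply_eq_iff_eq _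

lemma relEnt_conjStarAlgAut (U : unitary (Matrix n n ℂ)) {ρ σ : Matrix n n ℂ}
    (hρ : IsSelfAdjoint ρ) (hσ : IsSelfAdjoint σ) :
    relEnt (conjStarAlgAut ℂ _ U ρ) (conjStarAlgAut ℂ _ U σ) = relEnt ρ σ := by
  rw [relEnt, mlog_conjStarAlgAut U hρ, mlog_conjStarAlgAut U hσ, ← map_sub, ← map_mul,
    trace_conjStarAlgAut, relEnt]

lemma relEnt_conjStarAlgAut_smul_one (U : unitary (Matrix n n ℂ)) {ρ : Matrix n n ℂ}
    (hρ : IsSelfAdjoint ρ) (c : ℝ) :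
    relEnt (conjStarAlgAut ℂ _ U ρ) (c • 1) = relEnt ρ (c • 1) := by
  simpa only [conjStarAlgAut_smul_one] using
    relEnt_conjStarAlgAut U hρ ((IsSelfAdjoint.all c).smul (.one _))

lemma relEnt_smul_one_conjStarAlgAut (U : unitary (Matrix n n ℂ)) {ρ : Matrix n n ℂ}
    (hρ : IsSelfAdjoint ρ) (c : ℝ) :
    relEnt (c • 1) (conjStarAlgAut ℂ _ U ρ) = relEnt (c • 1) ρ := by
  simpa only [conjStarAlgAut_smul_one] using
    relEnt_conjStarAlgAut U ((IsSelfAdjoint.all c).smul (.one _)) hρ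

lemma IsHermitian.exists_unitary_diagonal_diag_conjStarAlgAut_eq [Nonempty n]
    {A : Matrix n n ℂ} (hA : A.IsHermitian) (htr : A.trace = 1) :
    ∃ W : unitary (Matrix n n ℂ), diagonal (fun i => conjStarAlgAut ℂ _ W A i i) =
      (1 / (Fintype.card n : ℝ)) • 1 := by
  let e : n ≃ ZMod (Fintype.card n) := Fintype.equivOfCardEq (ZMod.card _).symm
  let F : unitary (Matrix n n ℂ) := ⟨fourierMatrix e, fourierMatrix_mem_unitary e⟩
  have hdiag (i : n) :
      conjStarAlgAut ℂ _ (F * star hA.eigenvectorUnitary) A i i = A.trace / Fintype.card n := by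
    rw [conjStarAlgAut_mul_apply, hA.conjStarAlgAut_star_eigenvectorUnitary,
      conjStarAlgAut_apply, fourierMatrix_mul_diagonal_mul_star_apply_self,
      hA.trace_eq_sum_eigenvalues, div_eq_inv_mul]
    rfl
  refine ⟨F * star hA.eigenvectorUnitary, ?_⟩
  ext i j
  simp only [diagonal_apply, hdiag, htr, smul_apply, one_apply]
  split_ifs <;> simp

lemma re_trace_cfc {A : Matrix n n ℂ} (hA : A.IsHermitian) (f : ℝ → ℝ) :
    (cfc f A).trace.re = ∑ i, f (hA.eigenvalues i) := by
  rw [hA.cfc_eq, IsHermitian.cfc, trace_conjStarAlgAut, trace_diagonal, Complex.re_sum]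
  simp

lemma PosDef.sum_eigenvalues_eq_one {ρ : Matrix n n ℂ} (hρ : ρ.PosDef) (htr : ρ.trace = 1) :
    ∑ i, hρ.1.eigenvalues i = 1 := by
  have h := hρ.1.trace_eq_sum_eigenvalues
  rw [htr] at h
  simpa using (congrArg Complex.re h).symm

lemma mlog_smul_one (c : ℝ) :
    mlog (c • (1 : Matrix n n ℂ)) = Real.log c • 1 := by
  rw [mlog, ← Algebra.algebraMap_eq_smul_one, cfc_algebraMap, Algebra.algebraMap_eq_smul_one]

lemma relEnt_smul_one_right {ρ : Matrix n n ℂ} (hρ : ρ.PosDef) (htr : ρ.trace = 1) {c : ℝ}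
    (hc : 0 < c) :
    relEnt ρ (c • 1) = ∑ i, hρ.1.eigenvalues i * Real.log (hρ.1.eigenvalues i / c) := by
  have hev := hρ.eigenvalues_pos
  have hsa : IsSelfAdjoint ρ := hρ.1
  have hmul : ρ * mlog ρ = cfc (fun x => x * Real.log x) ρ := by
    rw [mlog, cfc_mul (fun x => x) Real.log ρ (finite_real_spectrum.continuousOn _)
      (finite_real_spectrum.continuousOn _), cfc_id' ℝ ρ]
  rw [relEnt, mlog_smul_one, mul_sub, hmul, mul_smul_comm, mul_one, trace_sub, trace_smul, htr,
    Complex.sub_re, re_trace_cfc hρ.1]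
  simp only [Real.log_div (hev _).ne' hc.ne', mul_sub, Finset.sum_sub_distrib, ← Finset.sum_mul,
    hρ.sum_eigenvalues_eq_one htr]
  simp

lemma relEnt_smul_one_left {ρ : Matrix n n ℂ} (hρ : ρ.PosDef) {c : ℝ} (hc : 0 < c) :
    relEnt (c • 1) ρ = ∑ i, c * Real.log (c / hρ.1.eigenvalues i) := by
  have hev := hρ.eigenvalues_pos
  rw [relEnt, mlog_smul_one, smul_mul_assoc, one_mul, trace_smul, trace_sub, trace_smul,
    trace_one, Complex.real_smul, Complex.re_ofReal_mul, Complex.sub_re, Complex.real_smul,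
    Complex.re_ofReal_mul, Complex.natCast_re, mlog, re_trace_cfc hρ.1]
  simp only [Real.log_div hc.ne' (hev _).ne', ← Finset.mul_sum, Finset.sum_sub_distrib,
    Finset.sum_const, Finset.card_univ, nsmul_eq_mul]
  ring

lemma relEnt_smul_one_right_nonneg {ρ : Matrix n n ℂ} (hρ : ρ.PosDef) (htr : ρ.trace = 1)
    {c : ℝ} (hc : 0 < c) (hcd : Fintype.card n * c ≤ 1) : 0 ≤ relEnt ρ (c • 1) := by
  rw [relEnt_smul_one_right hρ htr hc]
  refine Finset.sum_mul_log_div_nonneg _ (fun i _ => hρ.eigenvalues_pos i) (fun _ _ => hc) ?_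
  simpa [hρ.sum_eigenvalues_eq_one htr] using hcd

lemma relEnt_smul_one_left_nonneg {ρ : Matrix n n ℂ} (hρ : ρ.PosDef) (htr : ρ.trace = 1)
    {c : ℝ} (hc : 0 < c) (hcd : 1 ≤ Fintype.card n * c) : 0 ≤ relEnt (c • 1) ρ := by
  rw [relEnt_smul_one_left hρ hc]
  refine Finset.sum_mul_log_div_nonneg _ (fun _ _ => hc) (fun i _ => hρ.eigenvalues_pos i) ?_
  simpa [hρ.sum_eigenvalues_eq_one htr] using hcd

end Matrix

/-- **Proposition 5.4.** The decoherence-free modified log-Sobolev constant of the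
decoherence semigroup is at most the modified log-Sobolev constant of the
depolarizing semigroup: `α_N(𝓛^deco) ≤ α_1(L^γ_depol)`. -/
theorem alphaDF_deco_le_alpha_depol
    {n : Type*} [Fintype n] [DecidableEq n] [Nonempty n]
    (γ : ℝ) (hγ : 0 < γ) :
    sInf {x : ℝ | ∃ ρ : Matrix n n ℂ,
        ρ.PosDef ∧ Matrix.trace ρ = 1 ∧ ρ ≠ Matrix.diagonal (fun i => ρ i i) ∧
          x = γ * (relEnt ρ (Matrix.diagonal (fun i => ρ i i)) +
                relEnt (Matrix.diagonal (fun i => ρ i i)) ρ) /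
              (2 * relEnt ρ (Matrix.diagonal (fun i => ρ i i)))} ≤
      sInf {x : ℝ | ∃ ρ : Matrix n n ℂ,
        ρ.PosDef ∧ Matrix.trace ρ = 1 ∧
          ρ ≠ (1 / (Fintype.card n : ℝ)) • (1 : Matrix n n ℂ) ∧
          x = γ * (relEnt ρ ((1 / (Fintype.card n : ℝ)) • (1 : Matrix n n ℂ)) +
                relEnt ((1 / (Fintype.card n : ℝ)) • (1 : Matrix n n ℂ)) ρ) /
              (2 * relEnt ρ ((1 / (Fintype.card n : ℝ)) • (1 : Matrix n n ℂ)))} := by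
  apply Real.sInf_le_sInf_of_subset_of_nonneg
  · rintro _ ⟨ρ, hρ, htr, hne, rfl⟩
    obtain ⟨W, hW⟩ := hρ.1.exists_unitary_diagonal_diag_conjStarAlgAut_eq htr
    refine ⟨Unitary.conjStarAlgAut ℂ _ W ρ, (posDef_conjStarAlgAut_iff W).mpr hρ,
      by rw [trace_conjStarAlgAut, htr], ?_, ?_⟩
    · rwa [hW, Ne, conjStarAlgAut_eq_smul_one_iff]
    · rw [hW, relEnt_conjStarAlgAut_smul_one W hρ.1, relEnt_smul_one_conjStarAlgAut W hρ.1]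
  · rintro _ ⟨ρ, hρ, htr, -, rfl⟩
    have hc : 0 < 1 / (Fintype.card n : ℝ) := by positivity
    have hcd : (Fintype.card n : ℝ) * (1 / Fintype.card n) = 1 :=
      mul_one_div_cancel (by positivity)
    have := relEnt_smul_one_right_nonneg hρ htr hc hcd.le
    have := relEnt_smul_one_left_nonneg hρ htr hc hcd.ge
    positivity
  · rintro ⟨_, ρ, hρ, htr, hne, -⟩
    refine ⟨_, ρ, hρ, htr, fun hu => hne ?_, rfl⟩
    ext i j
    simp [hu, diagonal_apply, one_apply]
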